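/- arXiv:2010.15968 — 3 statements merged into one kernel-verified Lean document; each statement's English description precedes it below -/
import Mathlib

section
/- Let ρ be a density matrix on C^{D_v}⊗C^{D_h} (indexed by Fin D_v × Fin D_h), and let O be a Hermitian D_v×D_v matrix. Then |Tr((O ⊗ I_{D_h})·(ρ − I/(D_v·D_h)))| ≤ ‖O‖_∞ · √(2·(log D_v − S(Tr_h ρ))), where Tr_h ρ is the partial trace of ρ over the hidden (second) factor and S is the von Neumann entropy. -/
/-
The observable only sees the reduced state: with `σ = Tr_h ρ`,
`Tr((O ⊗ I)(ρ - I/(Dv Dh))) = Tr(O (σ - I/Dv))`. Diagonalising `σ = U diag(λ) U*` turns this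
into `∑ᵢ (U* O U)ᵢᵢ (λᵢ - 1/Dv)`, and every entry of `U* O U` is bounded by
`‖U* O U‖_∞ = ‖O‖_∞`, so the trace is at most `‖O‖_∞ ‖λ - u‖₁` with `u` the uniform
distribution. Pinsker's inequality `‖λ - u‖₁² ≤ 2 KL(λ ‖ u) = 2 (log Dv - S(σ))`
concludes. Pinsker itself follows from the pointwise bound
`(x - 1)² / (x + 2) ≤ (2/3) (x log x - x + 1)` and Sedrakyan's form of Cauchy–Schwarz
with the weights `pᵢ + 2 qᵢ`, whose total is `3`.
-/

open Matrix BigOperators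
open scoped ComplexOrder Kronecker

/-- The operator norm (largest singular value) of a complex square matrix, realized as the
norm of the induced operator on Euclidean space. -/
noncomputable def opNorm {n : Type*} [Fintype n] [DecidableEq n] (A : Matrix n n ℂ) : ℝ :=
  ‖Matrix.toEuclideanCLM (𝕜 := ℂ) A‖

/-- The von Neumann entropy `∑ i, -λ i * log (λ i)` of a matrix, computed from its
eigenvalues when it is Hermitian (and `0` otherwise). -/
noncomputable def vNEntropy {n : Type*} [Fintype n] [DecidableEq n] (σ : Matrix n n ℂ) : ℝ :=
  if h : σ.IsHermitian then ∑ i, Real.negMulLog (h.eigenvalues i) else 0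

/-- Partial trace over the hidden (second) tensor factor. -/
noncomputable def trH {Dv Dh : ℕ} (M : Matrix (Fin Dv × Fin Dh) (Fin Dv × Fin Dh) ℂ) :
    Matrix (Fin Dv) (Fin Dv) ℂ :=
  Matrix.of fun p v => ∑ q, M (p, q) (v, q)

open Real InformationTheory

namespace Real

lemma sub_one_mul_five_mul_add_one_div_le_log {x : ℝ} (hx : 0 < x) :
    (x - 1) * (5 * x + 1) / (2 * x * (x + 2)) ≤ log x := by
  let g : ℝ → ℝ := fun y ↦ log y - (y - 1) * (5 * y + 1) / (2 * y * (y + 2))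
  have hg : ∀ y, 0 < y → HasDerivAt g ((y - 1) ^ 3 / (y * (y + 2)) ^ 2) y := by
    intro y hy
    have hnum : HasDerivAt (fun y ↦ (y - 1) * (5 * y + 1)) (10 * y - 4) y :=
      (((hasDerivAt_id' y).sub_const 1).mul
        (((hasDerivAt_id' y).const_mul 5).add_const 1)).congr_deriv (by ring)
    have hden : HasDerivAt (fun y ↦ 2 * y * (y + 2)) (4 * y + 4) y :=
      (((hasDerivAt_id' y).const_mul 2).mul ((hasDerivAt_id' y).add_const 2)).congr_deriv
        (by ring)
    refine ((hasDerivAt_log hy.ne').sub (hnum.div hden (by positivity))).congr_deriv ?_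
    field_simp
    ring
  have hmin : IsMinOn g (Set.Ioi 0) 1 := by
    refine isMinOn_Ioi_of_deriv (hg 1 one_pos).continuousAt
      (fun y hy ↦ (hg y hy.1).differentiableAt.differentiableWithinAt)
      (fun y hy ↦ (hg y (one_pos.trans hy)).differentiableAt.differentiableWithinAt)
      (fun y hy ↦ ?_) (fun y hy ↦ ?_)
    · rw [(hg y hy.1).deriv]
      exact div_nonpos_of_nonpos_of_nonneg (Odd.pow_nonpos (by decide) (by linarith [hy.2]))
        (sq_nonneg _)
    · rw [(hg y (one_pos.trans hy)).deriv]
      have : 0 < y - 1 := sub_pos.2 hy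
      positivity
  have h := hmin (Set.mem_Ioi.2 hx)
  norm_num [g] at h
  linarith

end Real

namespace InformationTheory

open Finset

lemma sub_one_sq_div_le_klFun {x : ℝ} (hx : 0 ≤ x) :
    (x - 1) ^ 2 / (x + 2) ≤ 2 / 3 * klFun x := by
  rcases hx.eq_or_lt with rfl | hx
  · norm_num [klFun_zero]
  have hlog := Real.sub_one_mul_five_mul_add_one_div_le_log hx
  have key : 2 / 3 * klFun x - (x - 1) ^ 2 / (x + 2) =
      2 / 3 * x * (log x - (x - 1) * (5 * x + 1) / (2 * x * (x + 2))) := by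
    rw [klFun_apply]
    field_simp
    ring
  nlinarith [mul_nonneg hx.le (sub_nonneg.2 hlog)]

lemma sub_sq_div_le_mul_klFun {p q : ℝ} (hp : 0 ≤ p) (hq : 0 < q) :
    (p - q) ^ 2 / (p + 2 * q) ≤ 2 / 3 * (q * klFun (p / q)) :=
  calc (p - q) ^ 2 / (p + 2 * q) = q * ((p / q - 1) ^ 2 / (p / q + 2)) := by
        field_simp
    _ ≤ q * (2 / 3 * klFun (p / q)) := by
        gcongr
        exact sub_one_sq_div_le_klFun (div_nonneg hp hq.le)
    _ = 2 / 3 * (q * klFun (p / q)) := by ring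

theorem sq_sum_abs_sub_le_two_mul_sum_mul_klFun {ι : Type*} [Fintype ι] {p q : ι → ℝ}
    (hp : ∀ i, 0 ≤ p i) (hq : ∀ i, 0 < q i) (hp1 : ∑ i, p i = 1) (hq1 : ∑ i, q i = 1) :
    (∑ i, |p i - q i|) ^ 2 ≤ 2 * ∑ i, q i * klFun (p i / q i) := by
  have hweights : ∑ i, (p i + 2 * q i) = 3 := by
    rw [sum_add_distrib, ← mul_sum, hp1, hq1]
    norm_num
  have hsedrakyan := sq_sum_div_le_sum_sq_div univ (fun i ↦ |p i - q i|)
    (g := fun i ↦ p i + 2 * q i) fun i _ ↦ by linarith [hp i, hq i]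
  have hterms : ∑ i, |p i - q i| ^ 2 / (p i + 2 * q i) ≤
      2 / 3 * ∑ i, q i * klFun (p i / q i) := by
    rw [mul_sum]
    gcongr with i
    rw [sq_abs]
    exact sub_sq_div_le_mul_klFun (hp i) (hq i)
  rw [hweights] at hsedrakyan
  linarith

theorem sum_abs_sub_inv_card_le_sqrt {ι : Type*} [Fintype ι] {p : ι → ℝ}
    (hp : ∀ i, 0 ≤ p i) (hp1 : ∑ i, p i = 1) :
    ∑ i, |p i - (Fintype.card ι : ℝ)⁻¹| ≤
      √(2 * (log (Fintype.card ι) - ∑ i, negMulLog (p i))) := by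
  set n : ℝ := (Fintype.card ι : ℝ)
  obtain ⟨i₀, -, -⟩ := exists_ne_zero_of_sum_ne_zero (hp1.trans_ne one_ne_zero)
  have hn : 0 < n := by simpa [n] using Fintype.card_pos_iff.2 ⟨i₀⟩
  have hterm (i : ι) :
      n⁻¹ * klFun (p i / n⁻¹) = p i * log n - negMulLog (p i) + n⁻¹ - p i := by
    rcases (hp i).eq_or_lt with h | h
    · simp [← h, klFun_zero]
    · rw [klFun_apply, div_inv_eq_mul, log_mul h.ne' hn.ne', negMulLog]
      field_simp
      ring
  have hkl : ∑ i, n⁻¹ * klFun (p i / n⁻¹) = log n - ∑ i, negMulLog (p i) := by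
    simp only [hterm, sum_sub_distrib, sum_add_distrib, ← sum_mul, hp1, sum_const, card_univ,
      nsmul_eq_mul]
    field_simp [n]
    ring
  rw [← hkl]
  exact le_sqrt_of_sq_le <| sq_sum_abs_sub_le_two_mul_sum_mul_klFun hp (fun _ ↦ inv_pos.2 hn) hp1
    (by simp [n, hn.ne'])

end InformationTheory

namespace Matrix

open scoped Matrix.Norms.L2Operator

variable {𝕜 m n : Type*} [RCLike 𝕜] [Fintype m] [Fintype n] [DecidableEq n]

lemma norm_apply_le_l2_opNorm (A : Matrix m n 𝕜) (i : m) (j : n) : ‖A i j‖ ≤ ‖A‖ := by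
  have h := A.l2_opNorm_mulVec (PiLp.single 2 j 1)
  rw [PiLp.norm_single, norm_one, mul_one] at h
  refine le_of_eq_of_le ?_ ((PiLp.norm_apply_le _ i).trans h)
  simp

lemma norm_trace_mul_diagonal_le (B : Matrix n n 𝕜) (d : n → 𝕜) :
    ‖(B * diagonal d).trace‖ ≤ ‖B‖ * ∑ i, ‖d i‖ := by
  rw [Finset.mul_sum]
  calc ‖(B * diagonal d).trace‖ = ‖∑ i, B i i * d i‖ := by simp [trace, mul_diagonal]
    _ ≤ ∑ i, ‖B i i * d i‖ := norm_sum_le _ _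
    _ ≤ ∑ i, ‖B‖ * ‖d i‖ := by
        gcongr with i
        rw [norm_mul]
        gcongr
        exact norm_apply_le_l2_opNorm B i i

lemma IsHermitian.norm_trace_mul_sub_smul_one_le {σ : Matrix n n 𝕜} (hσ : σ.IsHermitian)
    (O : Matrix n n 𝕜) (c : ℝ) :
    ‖(O * (σ - (c : 𝕜) • 1)).trace‖ ≤ ‖O‖ * ∑ i, |hσ.eigenvalues i - c| := by
  set U : Matrix n n 𝕜 := (hσ.eigenvectorUnitary : Matrix n n 𝕜)
  set A := σ - (c : 𝕜) • 1
  have hU : U ∈ unitary (Matrix n n 𝕜) := hσ.eigenvectorUnitary.2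
  have hUU : star U * U = 1 := Unitary.star_mul_self_of_mem hU
  have hUV : U * star U = 1 := Unitary.mul_star_self_of_mem hU
  have hdiag : star U * A * U = diagonal fun i ↦ ((hσ.eigenvalues i - c : ℝ) : 𝕜) := by
    have h : star U * σ * U = diagonal (RCLike.ofReal ∘ hσ.eigenvalues) := by
      simpa [Unitary.conjStarAlgAut_apply] using hσ.conjStarAlgAut_star_eigenvectorUnitary
    rw [mul_sub, sub_mul, h, mul_smul_comm, mul_one, smul_mul_assoc, hUU]
    ext i j
    rcases eq_or_ne i j with rfl | hij <;> simp [*, Algebra.algebraMap_eq_smul_one, sub_smul]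
  have htrace : (O * A).trace = (star U * O * U * (star U * A * U)).trace := by
    rw [show star U * O * U * (star U * A * U) = star U * (O * A) * U by
      simp only [mul_assoc]; rw [← mul_assoc U (star U), hUV, one_mul],
      trace_mul_cycle, hUV, one_mul]
  rw [htrace, hdiag]
  refine (norm_trace_mul_diagonal_le _ _).trans_eq ?_
  rw [CStarRing.norm_mul_mem_unitary _ hU, CStarRing.norm_mem_unitary_mul _ (Unitary.star_mem hU)]
  simp only [RCLike.norm_ofReal]

end Matrix

section PartialTrace

variable {Dv Dh : ℕ}

lemma trace_kronecker_one_mul (O : Matrix (Fin Dv) (Fin Dv) ℂ)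
    (M : Matrix (Fin Dv × Fin Dh) (Fin Dv × Fin Dh) ℂ) :
    ((O ⊗ₖ (1 : Matrix (Fin Dh) (Fin Dh) ℂ)) * M).trace = (O * trH M).trace := by
  simp only [trace, diag, mul_apply, trH, of_apply, Fintype.sum_prod_type, kroneckerMap_apply,
    one_apply, mul_ite, mul_one, mul_zero, ite_mul, zero_mul, Finset.mul_sum, Finset.sum_ite_eq,
    Finset.mem_univ, if_true]
  exact Finset.sum_congr rfl fun p _ ↦ Finset.sum_comm

lemma trace_trH (M : Matrix (Fin Dv × Fin Dh) (Fin Dv × Fin Dh) ℂ) :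
    (trH M).trace = M.trace := by
  simp [trace, trH, Fintype.sum_prod_type]

lemma trH_sub (M N : Matrix (Fin Dv × Fin Dh) (Fin Dv × Fin Dh) ℂ) :
    trH (M - N) = trH M - trH N := by
  ext p v
  simp [trH, Finset.sum_sub_distrib]

lemma trH_smul (c : ℂ) (M : Matrix (Fin Dv × Fin Dh) (Fin Dv × Fin Dh) ℂ) :
    trH (c • M) = c • trH M := by
  ext p v
  simp [trH, Finset.mul_sum]

lemma trH_one : trH (1 : Matrix (Fin Dv × Fin Dh) (Fin Dv × Fin Dh) ℂ) = (Dh : ℂ) • 1 := by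
  ext p v
  rcases eq_or_ne p v with rfl | hpv <;> simp [trH, one_apply, *]

lemma trH_eq_sum_submatrix (M : Matrix (Fin Dv × Fin Dh) (Fin Dv × Fin Dh) ℂ) :
    trH M = ∑ q, M.submatrix (·, q) (·, q) := by
  ext p v
  simp [trH, Matrix.sum_apply]

lemma posSemidef_trH {ρ : Matrix (Fin Dv × Fin Dh) (Fin Dv × Fin Dh) ℂ} (hρ : ρ.PosSemidef) :
    (trH ρ).PosSemidef := by
  rw [trH_eq_sum_submatrix]
  exact posSemidef_sum _ fun q _ ↦ hρ.submatrix _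

end PartialTrace

theorem visible_observable_bound_entropy_general (Dv Dh : ℕ)
    (ρ : Matrix (Fin Dv × Fin Dh) (Fin Dv × Fin Dh) ℂ)
    (hρ : ρ.PosSemidef) (hρtr : ρ.trace = 1)
    (O : Matrix (Fin Dv) (Fin Dv) ℂ) :
    ‖((O ⊗ₖ (1 : Matrix (Fin Dh) (Fin Dh) ℂ)) *
        (ρ - (((Dv : ℂ) * (Dh : ℂ)))⁻¹ • 1)).trace‖ ≤
      opNorm O * Real.sqrt (2 * (Real.log Dv - vNEntropy (trH ρ))) := by
  have hDh : (Dh : ℂ) ≠ 0 := by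
    intro h
    obtain rfl : Dh = 0 := by exact_mod_cast h
    simp [trace] at hρtr
  have hσ := posSemidef_trH hρ
  have hσtr : ∑ i, hσ.1.eigenvalues i = 1 := by
    simpa [trace_trH, hρtr] using (congrArg RCLike.re hσ.1.trace_eq_sum_eigenvalues).symm
  have hreduce : ((O ⊗ₖ (1 : Matrix (Fin Dh) (Fin Dh) ℂ)) *
      (ρ - (((Dv : ℂ) * (Dh : ℂ)))⁻¹ • 1)).trace =
        (O * (trH ρ - (((Dv : ℝ)⁻¹ : ℝ) : ℂ) • 1)).trace := by
    rw [trace_kronecker_one_mul, trH_sub, trH_smul, trH_one, smul_smul]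
    congr 4
    push_cast
    field_simp
  rw [hreduce, vNEntropy, dif_pos hσ.1]
  -- `opNorm O` is definitionally the `Matrix.Norms.L2Operator` norm of `O`.
  calc _ ≤ opNorm O * ∑ i, |hσ.1.eigenvalues i - (Dv : ℝ)⁻¹| :=
        hσ.1.norm_trace_mul_sub_smul_one_le O _
    _ ≤ _ := mul_le_mul_of_nonneg_left
        (by simpa using sum_abs_sub_inv_card_le_sqrt hσ.eigenvalues_nonneg hσtr) (norm_nonneg _)

/-- Proposition 1 of the paper: for a density matrix `ρ` on the
visible ⊗ hidden space and a Hermitian visible observable `O`,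
`|Tr((O ⊗ I)(ρ - I/(Dv·Dh)))| ≤ ‖O‖_∞ √(2 (log Dv - S(Tr_h ρ)))`. -/
theorem visible_observable_bound_entropy (Dv Dh : ℕ)
    (ρ : Matrix (Fin Dv × Fin Dh) (Fin Dv × Fin Dh) ℂ)
    (hρ : ρ.PosSemidef) (hρtr : ρ.trace = 1)
    (O : Matrix (Fin Dv) (Fin Dv) ℂ) (hO : O.IsHermitian) :
    ‖((O ⊗ₖ (1 : Matrix (Fin Dh) (Fin Dh) ℂ)) *
        (ρ - (((Dv : ℂ) * (Dh : ℂ)))⁻¹ • 1)).trace‖ ≤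
      opNorm O * Real.sqrt (2 * (Real.log Dv - vNEntropy (trH ρ))) :=
  visible_observable_bound_entropy_general Dv Dh ρ hρ hρtr O
end

section
/- Let φ = U·e₀ be a Haar-random unit vector in C^D, i.e. U is distributed according to the Haar probability measure on the unitary group U(D) and e₀ is a fixed standard basis vector. Then E[ |φ⟩⟨φ| ⊗ |φ⟩⟨φ| ] = (I + F)/(D·(D+1)), where F is the swap matrix on C^D ⊗ C^D and |φ⟩⟨φ| denotes the rank-one projector onto φ. -/
/-!
Let `ν` be the law of the column `φ = U e₀`. Left invariance of the Haar measure makes `ν`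
invariant under every unitary, and `φ` is a unit vector. Write `M(a,b,c,d) = E[φ_a φ̄_c φ_b φ̄_d]`.
Invariance under diagonal phase unitaries kills `M(a,b,c,d)` unless `{a,b} = {c,d}`; invariance
under permutation matrices makes `α = E|φ_a|⁴` and `β = E|φ_a|²|φ_b|²` (`a ≠ b`) independent of
the indices; invariance under a Hadamard gate on two coordinates gives `α = 2β`; and `‖φ‖ = 1`
gives `Dα + D(D-1)β = 1`. Hence `β = 1/(D(D+1))` and `α = 2β`, which is `(I + F)/(D(D+1))`.
-/

open Matrix BigOperators MeasureTheory
open scoped Kronecker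

/-- The Borel/pi measurable-space structure on complex matrices. -/
noncomputable instance matrixMeasurableSpace {n m : Type*} : MeasurableSpace (Matrix n m ℂ) :=
  inferInstanceAs (MeasurableSpace (n → m → ℂ))

/-- The rank-one projector `|φ⟩⟨φ|` onto a vector `φ`. -/
noncomputable def proj {n : Type*} (φ : n → ℂ) : Matrix n n ℂ :=
  Matrix.of fun i j => φ i * star (φ j)

/-- The swap (flip) matrix `F` on `ℂ^D ⊗ ℂ^D`, with entries
`F((a,b),(c,d)) = δ_{a,d} δ_{b,c}`. -/
def swapMat (D : ℕ) : Matrix (Fin D × Fin D) (Fin D × Fin D) ℂ :=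
  Matrix.of fun x y => if x.1 = y.2 ∧ x.2 = y.1 then 1 else 0

instance matrixBorelSpace {n m : Type*} [Countable n] [Countable m] :
    BorelSpace (Matrix n m ℂ) :=
  inferInstanceAs (BorelSpace (n → m → ℂ))

namespace RandomUnitVector

variable {n : Type*}

lemma kronecker_proj_apply (u : n → ℂ) (a b c d : n) :
    (proj u ⊗ₖ proj u) (a, b) (c, d) = u a * star (u c) * (u b * star (u d)) := rfl

lemma continuous_kronecker_proj_apply (x y : n × n) :
    Continuous fun u : n → ℂ => (proj u ⊗ₖ proj u) x y := by
  simp only [kroneckerMap_apply, proj, of_apply]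
  fun_prop

noncomputable def secondMoment (ν : Measure (n → ℂ)) : Matrix (n × n) (n × n) ℂ :=
  of fun x y => ∫ u, (proj u ⊗ₖ proj u) x y ∂ν

variable {ν : Measure (n → ℂ)}

lemma secondMoment_apply (x y : n × n) :
    secondMoment ν x y = ∫ u, (proj u ⊗ₖ proj u) x y ∂ν := rfl

lemma secondMoment_apply_comm_left (a b c d : n) :
    secondMoment ν (a, b) (c, d) = secondMoment ν (b, a) (c, d) := by
  simp only [secondMoment_apply, kronecker_proj_apply]
  congr 1; funext u; ring

lemma secondMoment_apply_comm_right (a b c d : n) :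
    secondMoment ν (a, b) (c, d) = secondMoment ν (a, b) (d, c) := by
  simp only [secondMoment_apply, kronecker_proj_apply]
  congr 1; funext u; ring

variable [Fintype n]

lemma norm_apply_le_one {u : n → ℂ} (hu : ∑ i, ‖u i‖ ^ 2 = 1) (i : n) : ‖u i‖ ≤ 1 := by
  rw [← sq_le_one_iff₀ (norm_nonneg _), ← hu]
  exact Finset.single_le_sum (fun j _ => sq_nonneg ‖u j‖) (Finset.mem_univ i)

lemma integrable_kronecker_proj_apply [IsFiniteMeasure ν] (hunit : ∀ᵐ u ∂ν, ∑ i, ‖u i‖ ^ 2 = 1)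
    (x y : n × n) : Integrable (fun u => (proj u ⊗ₖ proj u) x y) ν := by
  obtain ⟨a, b⟩ := x
  obtain ⟨c, d⟩ := y
  refine .of_bound (continuous_kronecker_proj_apply _ _).aestronglyMeasurable 1 ?_
  filter_upwards [hunit] with u hu
  have h := norm_apply_le_one hu
  simp only [kronecker_proj_apply, norm_mul, norm_star]
  exact mul_le_one₀ (mul_le_one₀ (h a) (norm_nonneg _) (h c)) (by positivity)
    (mul_le_one₀ (h b) (norm_nonneg _) (h d))

lemma sum_secondMoment_apply_self [IsProbabilityMeasure ν]
    (hunit : ∀ᵐ u ∂ν, ∑ i, ‖u i‖ ^ 2 = 1) : ∑ a, ∑ b, secondMoment ν (a, b) (a, b) = 1 := by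
  have htrace : ∀ᵐ u ∂ν, ∑ a, ∑ b, (proj u ⊗ₖ proj u) (a, b) (a, b) = 1 := by
    filter_upwards [hunit] with u hu
    simp only [kronecker_proj_apply, ← Finset.sum_mul_sum, Complex.star_def, Complex.mul_conj']
    norm_cast
    rw [hu, one_mul]
  have hint := integrable_kronecker_proj_apply hunit
  simp only [secondMoment_apply]
  simp_rw [← integral_finsetSum _ fun b _ => hint (_, b) (_, b)]
  rw [← integral_finsetSum _ fun a _ => integrable_finsetSum _ fun b _ => hint (a, b) (a, b),
    integral_congr_ae htrace, integral_const, probReal_univ, one_smul]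

variable [DecidableEq n]

lemma diagonal_mem_unitaryGroup {z : n → ℂ} (hz : ∀ i, ‖z i‖ = 1) :
    diagonal z ∈ unitaryGroup n ℂ := by
  rw [mem_unitaryGroup_iff', star_eq_conjTranspose, diagonal_conjTranspose, diagonal_mul_diagonal,
    ← diagonal_one]
  congr 1
  funext i
  simp [Complex.conj_mul', hz]

lemma permMatrix_mem_unitaryGroup (σ : Equiv.Perm n) :
    σ.permMatrix ℂ ∈ unitaryGroup n ℂ := by
  rw [mem_unitaryGroup_iff', star_eq_conjTranspose, conjTranspose_permMatrix, ← permMatrix_mul,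
    mul_inv_cancel, permMatrix_one]

/-- `(1/√2) [[1, 1], [1, -1]]` on the coordinates `p, q`, the identity on the others. -/
noncomputable def hadamardGate (p q : n) : Matrix n n ℂ :=
  1 - single p p 1 - single q q 1 +
    (Real.sqrt 2 : ℂ)⁻¹ • (single p p 1 + single p q 1 + single q p 1 - single q q 1)

lemma hadamardGate_mulVec_apply {p q : n} (hpq : p ≠ q) (v : n → ℂ) (i : n) :
    (hadamardGate p q *ᵥ v) i = if i = p then (Real.sqrt 2 : ℂ)⁻¹ * (v p + v q) else
      if i = q then (Real.sqrt 2 : ℂ)⁻¹ * (v p - v q) else v i := by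
  simp only [hadamardGate, add_mulVec, sub_mulVec, smul_mulVec, one_mulVec, single_mulVec]
  split_ifs <;> subst_vars <;> simp [hpq.symm, *]

omit [Fintype n] in
lemma star_hadamardGate (p q : n) : star (hadamardGate p q) = hadamardGate p q := by
  simp only [hadamardGate, star_eq_conjTranspose, conjTranspose_add, conjTranspose_sub,
    conjTranspose_one, conjTranspose_single, conjTranspose_smul, star_one, star_inv₀,
    Complex.star_def, Complex.conj_ofReal]
  congr 2
  abel

lemma sq_inv_sqrt_two : (Real.sqrt 2 : ℂ)⁻¹ ^ 2 = 2⁻¹ := by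
  rw [inv_pow, ← Complex.ofReal_pow, Real.sq_sqrt zero_le_two]
  norm_num

lemma hadamardGate_mulVec_hadamardGate_mulVec {p q : n} (hpq : p ≠ q) (v : n → ℂ) :
    hadamardGate p q *ᵥ (hadamardGate p q *ᵥ v) = v := by
  funext i
  simp only [hadamardGate_mulVec_apply hpq, if_neg hpq.symm, if_true]
  split_ifs with hp hq
  · subst hp; linear_combination (2 * v i) * sq_inv_sqrt_two
  · subst hq; linear_combination (2 * v i) * sq_inv_sqrt_two
  · rfl

lemma hadamardGate_mem_unitaryGroup {p q : n} (hpq : p ≠ q) :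
    hadamardGate p q ∈ unitaryGroup n ℂ := by
  rw [mem_unitaryGroup_iff', star_hadamardGate]
  refine ext_of_mulVec_single fun j => ?_
  rw [← mulVec_mulVec, hadamardGate_mulVec_hadamardGate_mulVec hpq, one_mulVec]

lemma kronecker_proj_hadamardGate_mulVec_apply {p q : n} (hpq : p ≠ q) (u : n → ℂ) :
    (proj (hadamardGate p q *ᵥ u) ⊗ₖ proj (hadamardGate p q *ᵥ u)) (p, p) (p, p) =
      4⁻¹ * ∑ x ∈ {p, q} ×ˢ {p, q}, ∑ y ∈ {p, q} ×ˢ {p, q}, (proj u ⊗ₖ proj u) x y := by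
  simp only [Finset.sum_product, Finset.sum_pair hpq, kronecker_proj_apply,
    hadamardGate_mulVec_apply hpq, if_true, star_mul', star_add, star_inv₀, Complex.star_def,
    Complex.conj_ofReal]
  linear_combination ((Real.sqrt 2 : ℂ)⁻¹ ^ 2 + 2⁻¹) * (u p + u q) ^ 2 *
    ((starRingEnd ℂ) (u p) + (starRingEnd ℂ) (u q)) ^ 2 * sq_inv_sqrt_two

def IsUnitarilyInvariant (ν : Measure (n → ℂ)) : Prop :=
  ∀ V ∈ unitaryGroup n ℂ, ν.map (V *ᵥ ·) = ν

lemma secondMoment_apply_eq_integral_mulVec (hν : IsUnitarilyInvariant ν) {V : Matrix n n ℂ}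
    (hV : V ∈ unitaryGroup n ℂ) (x y : n × n) :
    secondMoment ν x y = ∫ u, (proj (V *ᵥ u) ⊗ₖ proj (V *ᵥ u)) x y ∂ν := by
  conv_lhs => rw [secondMoment_apply, ← hν V hV]
  exact integral_map (by fun_prop : Continuous (V *ᵥ ·)).aemeasurable
    (continuous_kronecker_proj_apply x y).aestronglyMeasurable

lemma secondMoment_apply_eq_zero_of_phase (hν : IsUnitarilyInvariant ν) {z : n → ℂ}
    (hz : ∀ i, ‖z i‖ = 1) {a b c d : n} (h : z a * star (z c) * (z b * star (z d)) ≠ 1) :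
    secondMoment ν (a, b) (c, d) = 0 := by
  have key : z a * star (z c) * (z b * star (z d)) * secondMoment ν (a, b) (c, d) =
      secondMoment ν (a, b) (c, d) := by
    conv_rhs => rw [secondMoment_apply_eq_integral_mulVec hν (diagonal_mem_unitaryGroup hz)]
    simp only [secondMoment_apply, kronecker_proj_apply, mulVec_diagonal, star_mul',
      ← integral_const_mul]
    congr 1; funext u; ring
  exact (mul_left_eq_self₀.mp key).resolve_left h

lemma secondMoment_apply_eq_zero_of_left (hν : IsUnitarilyInvariant ν) {a b c d : n}
    (hac : a ≠ c) (had : a ≠ d) : secondMoment ν (a, b) (c, d) = 0 := by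
  refine secondMoment_apply_eq_zero_of_phase hν (z := fun i => if i = a then Complex.I else 1)
    (fun i => by split_ifs <;> simp) ?_
  by_cases hb : b = a <;> norm_num [hb, hac.symm, had.symm, Complex.ext_iff]

lemma secondMoment_apply_eq_zero_of_right (hν : IsUnitarilyInvariant ν) {a b c d : n}
    (hca : c ≠ a) (hcb : c ≠ b) : secondMoment ν (a, b) (c, d) = 0 := by
  refine secondMoment_apply_eq_zero_of_phase hν (z := fun i => if i = c then Complex.I else 1)
    (fun i => by split_ifs <;> simp) ?_
  by_cases hd : d = c <;> norm_num [hd, hca.symm, hcb.symm, Complex.ext_iff]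

lemma secondMoment_apply_eq_zero (hν : IsUnitarilyInvariant ν) {a b c d : n}
    (h₁ : ¬(a = c ∧ b = d)) (h₂ : ¬(a = d ∧ b = c)) : secondMoment ν (a, b) (c, d) = 0 := by
  by_cases ha : a ≠ c ∧ a ≠ d
  · exact secondMoment_apply_eq_zero_of_left hν ha.1 ha.2
  by_cases hb : b ≠ c ∧ b ≠ d
  · rw [secondMoment_apply_comm_left]; exact secondMoment_apply_eq_zero_of_left hν hb.1 hb.2
  by_cases hc : c ≠ a ∧ c ≠ b
  · exact secondMoment_apply_eq_zero_of_right hν hc.1 hc.2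
  by_cases hd : d ≠ a ∧ d ≠ b
  · rw [secondMoment_apply_comm_right]; exact secondMoment_apply_eq_zero_of_right hν hd.1 hd.2
  -- now `{a, b} = {c, d}` as sets, which `h₁` and `h₂` rule out
  grind

lemma secondMoment_apply_perm (hν : IsUnitarilyInvariant ν) (σ : Equiv.Perm n) (a b c d : n) :
    secondMoment ν (σ a, σ b) (σ c, σ d) = secondMoment ν (a, b) (c, d) := by
  rw [secondMoment_apply_eq_integral_mulVec hν (permMatrix_mem_unitaryGroup σ) (a, b)]
  simp only [secondMoment_apply, kronecker_proj_apply, permMatrix_mulVec, Function.comp_apply]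

lemma secondMoment_apply_diag_eq (hν : IsUnitarilyInvariant ν) (a p : n) :
    secondMoment ν (a, a) (a, a) = secondMoment ν (p, p) (p, p) := by
  simpa using secondMoment_apply_perm hν (Equiv.swap p a) p p p p

lemma secondMoment_apply_offDiag_eq (hν : IsUnitarilyInvariant ν) {a b p q : n} (hab : a ≠ b)
    (hpq : p ≠ q) : secondMoment ν (a, b) (a, b) = secondMoment ν (p, q) (p, q) := by
  set b' := Equiv.swap a p b
  have hb' : b' ≠ p := by simpa [b', Equiv.swap_apply_eq_iff] using hab.symm
  calc secondMoment ν (a, b) (a, b) = secondMoment ν (p, b') (p, b') := by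
        simpa [b'] using (secondMoment_apply_perm hν (Equiv.swap a p) a b a b).symm
    _ = secondMoment ν (p, q) (p, q) := by
        simpa [Equiv.swap_apply_of_ne_of_ne hb'.symm hpq] using
          (secondMoment_apply_perm hν (Equiv.swap b' q) p b' p b').symm

/-- Invariance under the Hadamard gate: `E|φ_p|⁴ = E|(φ_p + φ_q)/√2|⁴ = (2α + 4β)/4`. -/
lemma secondMoment_apply_diag_eq_two_mul [IsFiniteMeasure ν] (hν : IsUnitarilyInvariant ν)
    (hunit : ∀ᵐ u ∂ν, ∑ i, ‖u i‖ ^ 2 = 1) {p q : n} (hpq : p ≠ q) :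
    secondMoment ν (p, p) (p, p) = 2 * secondMoment ν (p, q) (p, q) := by
  have hint := integrable_kronecker_proj_apply hunit
  have hexp : secondMoment ν (p, p) (p, p) = 4⁻¹ * ∑ x ∈ {p, q} ×ˢ {p, q},
      ∑ y ∈ {p, q} ×ˢ {p, q}, secondMoment ν x y := by
    rw [secondMoment_apply_eq_integral_mulVec hν (hadamardGate_mem_unitaryGroup hpq)]
    simp only [kronecker_proj_hadamardGate_mulVec_apply hpq, integral_const_mul]
    rw [integral_finsetSum _ fun x _ => integrable_finsetSum _ fun y _ => hint x y]
    exact congrArg _ (Finset.sum_congr rfl fun x _ => integral_finsetSum _ fun y _ => hint x y)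
  simp only [Finset.sum_product, Finset.sum_pair hpq, hpq, hpq.symm, and_false, and_true, and_self,
    not_false_eq_true, secondMoment_apply_eq_zero hν, add_zero, zero_add] at hexp
  rw [secondMoment_apply_diag_eq hν q p, secondMoment_apply_comm_right p q q p,
    secondMoment_apply_comm_left q p, secondMoment_apply_comm_left q p,
    secondMoment_apply_comm_right p q q p] at hexp
  linear_combination 2 * hexp

lemma secondMoment_apply_self_eq [IsFiniteMeasure ν] (hν : IsUnitarilyInvariant ν)
    (hunit : ∀ᵐ u ∂ν, ∑ i, ‖u i‖ ^ 2 = 1) {p q : n} (hpq : p ≠ q) (a b : n) :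
    secondMoment ν (a, b) (a, b) = (1 + if a = b then 1 else 0) * secondMoment ν (p, q) (p, q) := by
  split_ifs with hab
  · rw [hab, secondMoment_apply_diag_eq hν b p, secondMoment_apply_diag_eq_two_mul hν hunit hpq]
    ring
  · rw [add_zero, one_mul, secondMoment_apply_offDiag_eq hν hab hpq]

lemma secondMoment_apply_offDiag [IsProbabilityMeasure ν] (hν : IsUnitarilyInvariant ν)
    (hunit : ∀ᵐ u ∂ν, ∑ i, ‖u i‖ ^ 2 = 1) {p q : n} (hpq : p ≠ q) :
    secondMoment ν (p, q) (p, q) = ((Fintype.card n : ℂ) * (Fintype.card n + 1))⁻¹ := by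
  have htrace := sum_secondMoment_apply_self hunit
  rw [Finset.sum_congr rfl fun a _ => Finset.sum_congr rfl fun b _ =>
    secondMoment_apply_self_eq hν hunit hpq a b] at htrace
  simp only [← Finset.sum_mul, Finset.sum_add_distrib, Finset.sum_ite_eq, Finset.mem_univ,
    if_true, Finset.sum_const, Finset.card_univ, nsmul_eq_mul, mul_one] at htrace
  rw [eq_inv_of_mul_eq_one_right htrace]
  ring

lemma secondMoment_apply_diag [IsProbabilityMeasure ν] (hν : IsUnitarilyInvariant ν)
    (hunit : ∀ᵐ u ∂ν, ∑ i, ‖u i‖ ^ 2 = 1) (p : n) :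
    secondMoment ν (p, p) (p, p) = 2 * ((Fintype.card n : ℂ) * (Fintype.card n + 1))⁻¹ := by
  rcases subsingleton_or_nontrivial n with hn | hn
  · have := uniqueOfSubsingleton p
    have htrace := sum_secondMoment_apply_self (ν := ν) hunit
    rw [Fintype.sum_subsingleton _ p, Fintype.sum_subsingleton _ p] at htrace
    rw [htrace, Fintype.card_unique]
    norm_num
  · obtain ⟨q, hqp⟩ := exists_ne p
    rw [secondMoment_apply_diag_eq_two_mul hν hunit hqp.symm,
      secondMoment_apply_offDiag hν hunit hqp.symm]

theorem secondMoment_eq [IsProbabilityMeasure ν] (hν : IsUnitarilyInvariant ν)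
    (hunit : ∀ᵐ u ∂ν, ∑ i, ‖u i‖ ^ 2 = 1) :
    secondMoment ν = ((Fintype.card n : ℂ) * (Fintype.card n + 1))⁻¹ •
      (1 + Equiv.Perm.permMatrix ℂ (Equiv.prodComm n n)) := by
  ext ⟨a, b⟩ ⟨c, d⟩
  simp only [Matrix.smul_apply, Matrix.add_apply, one_apply, PEquiv.toMatrix_apply,
    Equiv.toPEquiv_apply, Option.mem_def, Option.some.injEq, Equiv.prodComm_apply,
    Prod.swap_prod_mk, Prod.ext_iff, smul_eq_mul]
  split_ifs with h₁ h₂ h₂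
  · obtain ⟨rfl, rfl⟩ := h₁
    obtain ⟨rfl, -⟩ := h₂
    rw [secondMoment_apply_diag hν hunit]
    ring
  · obtain ⟨rfl, rfl⟩ := h₁
    rw [secondMoment_apply_offDiag hν hunit fun hab => h₂ ⟨hab.symm, hab⟩]
    ring
  · obtain ⟨rfl, rfl⟩ := h₂
    rw [secondMoment_apply_comm_right,
      secondMoment_apply_offDiag hν hunit fun hab => h₁ ⟨hab, hab.symm⟩]
    ring
  · rw [secondMoment_apply_eq_zero hν h₁ (h₂ ∘ And.symm)]
    ring

lemma sum_norm_sq_apply_eq_one {U : Matrix n n ℂ} (hU : U ∈ unitaryGroup n ℂ) (e : n) :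
    ∑ i, ‖U i e‖ ^ 2 = 1 := by
  have h := congrFun (congrFun (mem_unitaryGroup_iff'.mp hU) e) e
  simp only [mul_apply, star_apply, Complex.star_def, Complex.conj_mul', one_apply_eq] at h
  exact_mod_cast h

def column (e : n) (U : unitaryGroup n ℂ) : n → ℂ := fun i => (U : Matrix n n ℂ) i e

lemma measurable_column (e : n) : Measurable (column e) :=
  (continuous_pi fun i => Continuous.matrix_elem
    (A := fun U : unitaryGroup n ℂ => (U : Matrix n n ℂ)) continuous_subtype_val i e).measurable

lemma isUnitarilyInvariant_map_column {μ : Measure (unitaryGroup n ℂ)}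
    (hμ : ∀ V : unitaryGroup n ℂ, μ.map (V * ·) = μ) (e : n) :
    IsUnitarilyInvariant (μ.map (column e)) := by
  intro V hV
  rw [Measure.map_map (by fun_prop : Continuous (V *ᵥ ·)).measurable (measurable_column e)]
  conv_rhs => rw [← hμ ⟨V, hV⟩, Measure.map_map (measurable_column e)
    (continuous_const_mul _).measurable]
  rfl

lemma ae_sum_norm_sq_eq_one_map_column (μ : Measure (unitaryGroup n ℂ)) (e : n) :
    ∀ᵐ u ∂μ.map (column e), ∑ i, ‖u i‖ ^ 2 = 1 :=
  (ae_map_iff (measurable_column e).aemeasurable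
    (measurableSet_eq_fun (by fun_prop) measurable_const)).2
    (ae_of_all _ fun U => sum_norm_sq_apply_eq_one U.2 e)

end RandomUnitVector

lemma swapMat_eq_permMatrix (D : ℕ) :
    swapMat D = Equiv.Perm.permMatrix ℂ (Equiv.prodComm (Fin D) (Fin D)) := by
  ext ⟨a, b⟩ ⟨c, d⟩
  simp [swapMat, PEquiv.toMatrix_apply, Prod.ext_iff, and_comm, eq_comm]

open RandomUnitVector in
/-- for a Haar-random unit vector `φ = U e₀` in `ℂ^D`
(with `U` distributed according to the Haar probability measure on `U(D)`, i.e. the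
left-invariant probability measure on the unitary group),
`E[|φ⟩⟨φ| ⊗ |φ⟩⟨φ|] = (I + F)/(D(D+1))` entrywise. -/
theorem haar_second_moment_projector (D : ℕ) (hD : 0 < D)
    (μ : Measure (Matrix.unitaryGroup (Fin D) ℂ)) [IsProbabilityMeasure μ]
    (hμ : ∀ V : Matrix.unitaryGroup (Fin D) ℂ,
      Measure.map (fun U => V * U) μ = μ) :
    (Matrix.of fun x y =>
        ∫ U : Matrix.unitaryGroup (Fin D) ℂ,
          ((proj (fun i => (U : Matrix (Fin D) (Fin D) ℂ) i ⟨0, hD⟩)) ⊗ₖ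
            (proj (fun i => (U : Matrix (Fin D) (Fin D) ℂ) i ⟨0, hD⟩))) x y ∂μ) =
      (((D : ℂ) * ((D : ℂ) + 1)))⁻¹ • (1 + swapMat D) := by
  set e : Fin D := ⟨0, hD⟩
  have hcol := (measurable_column e).aemeasurable (μ := μ)
  have : IsProbabilityMeasure (μ.map (column e)) := Measure.isProbabilityMeasure_map hcol
  have hmap : (of fun x y => ∫ U, (proj (column e U) ⊗ₖ proj (column e U)) x y ∂μ) =
      secondMoment (μ.map (column e)) := by
    ext x y
    exact (integral_map hcol (continuous_kronecker_proj_apply x y).aestronglyMeasurable).symm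
  refine hmap.trans ?_
  rw [secondMoment_eq (isUnitarilyInvariant_map_column hμ e)
    (ae_sum_norm_sq_eq_one_map_column μ e), Fintype.card_fin, swapMat_eq_permMatrix]
end

section
/- Let φ = U·e₀ be a Haar-random unit vector in C^{D_v}⊗C^{D_h} (U Haar-distributed on the unitary group of dimension D_v·D_h). Then E[ Tr( (Tr_h |φ⟩⟨φ|)² ) ] = (D_v + D_h)/(D_v·D_h + 1). -/
/-!
Write `φ = U e₀` and `M i j k l = 𝔼[φᵢ φ̄ⱼ φₖ φ̄ₗ]`. Left invariance of `μ` makes `M` invariant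
under `V ⊗ V̄ ⊗ V ⊗ V̄` for every unitary `V`. Diagonal phases force `M i j k l = 0` unless every
index occurs as often among `i, k` as among `j, l`; permutations make `𝔼|φₐ|⁴` independent of `a`;
the unitary `((1 + I)/2) • 1 + ((1 - I)/2) • swap a b` gives `𝔼|φₐ|⁴ = 2 𝔼|φₐ|²|φ_b|²` for `a ≠ b`.
With `∑ₐ |φₐ|² = 1` this yields `𝔼|φₐ|²|φ_b|² = (1 + δ_{ab})/(D(D+1))`, and the purity
`∑ φ_{pq} φ̄_{vq} φ_{vq'} φ̄_{pq'}` averages to `(D_v D_h² + D_v² D_h)/(D(D+1))`.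
-/

open Matrix BigOperators MeasureTheory
open scoped Kronecker

open ComplexConjugate
open Complex (I)

-- Identifies the entrywise σ-algebra with the Borel one, so that the unitary group gets
-- `MeasurableMul` and `integral_mul_left_eq_self` applies.
instance Matrix.borelSpace {m n : Type*} [Countable m] [Countable n] :
    BorelSpace (Matrix m n ℂ) :=
  inferInstanceAs (BorelSpace (m → n → ℂ))

theorem integral_sum_sum_sum_sum {X : Type*} [MeasurableSpace X] {μ : Measure X}
    {α β γ δ : Type*} [Fintype α] [Fintype β] [Fintype γ] [Fintype δ]
    {f : α → β → γ → δ → X → ℂ} (hf : ∀ a b c d, Integrable (f a b c d) μ) :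
    ∫ x, ∑ a, ∑ b, ∑ c, ∑ d, f a b c d x ∂μ = ∑ a, ∑ b, ∑ c, ∑ d, ∫ x, f a b c d x ∂μ := by
  have h₃ a b c : Integrable (fun x => ∑ d, f a b c d x) μ :=
    integrable_finsetSum _ fun d _ => hf a b c d
  have h₂ a b : Integrable (fun x => ∑ c, ∑ d, f a b c d x) μ :=
    integrable_finsetSum _ fun c _ => h₃ a b c
  have h₁ a : Integrable (fun x => ∑ b, ∑ c, ∑ d, f a b c d x) μ :=
    integrable_finsetSum _ fun b _ => h₂ a b
  simp_rw [integral_finsetSum _ fun a _ => h₁ a, integral_finsetSum _ fun b _ => h₂ _ b,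
    integral_finsetSum _ fun c _ => h₃ _ _ c, integral_finsetSum _ fun d _ => hf _ _ _ d]

namespace Matrix

variable {n R : Type*} [Fintype n] [DecidableEq n] [CommRing R] [StarRing R]

lemma diagonal_mem_unitaryGroup {d : n → R} (hd : ∀ i, star (d i) * d i = 1) :
    diagonal d ∈ unitaryGroup n R := by
  rw [mem_unitaryGroup_iff', star_eq_conjTranspose, diagonal_conjTranspose,
    diagonal_mul_diagonal, ← diagonal_one]
  exact congrArg diagonal (funext hd)

lemma permMatrix_mem_unitaryGroup (σ : Equiv.Perm n) : σ.permMatrix R ∈ unitaryGroup n R := by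
  rw [mem_unitaryGroup_iff', star_eq_conjTranspose, conjTranspose_permMatrix, ← permMatrix_mul,
    mul_inv_cancel, permMatrix_one]

lemma smul_one_add_smul_swap_mem_unitaryGroup {α β : R} (i j : n)
    (h₁ : star α * α + star β * β = 1) (h₂ : star α * β + star β * α = 0) :
    α • (1 : Matrix n n R) + β • swap R i j ∈ unitaryGroup n R := by
  rw [mem_unitaryGroup_iff', star_add, star_smul, star_smul, star_one,
    star_eq_conjTranspose (swap R i j), conjTranspose_swap]
  simp only [add_mul, mul_add, smul_mul_smul_comm, swap_mul_self, one_mul, mul_one]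
  linear_combination (norm := module) h₁ • (1 : Matrix n n R) + h₂ • swap R i j

end Matrix

namespace Matrix.UnitaryGroup

variable {n : Type*} [Fintype n] [DecidableEq n]

lemma sum_conj_mul_self_col (U : unitaryGroup n ℂ) (e : n) : ∑ i, conj (U i e) * U i e = 1 := by
  have h := congrFun (congrFun (star_mul_self U) e) e
  rwa [Matrix.mul_apply, one_apply_eq] at h

lemma continuous_apply (i j : n) : Continuous fun U : unitaryGroup n ℂ => U i j :=
  continuous_subtype_val.matrix_elem i j

end Matrix.UnitaryGroup

section HaarColumn

variable {ι : Type*} [Fintype ι] [DecidableEq ι] (μ : Measure (unitaryGroup ι ℂ)) (e : ι)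

noncomputable def fourthMoment (i j k l : ι) : ℂ :=
  ∫ U, U i e * conj (U j e) * (U k e * conj (U l e)) ∂μ

lemma integrable_fourthMoment_integrand [IsFiniteMeasure μ] (i j k l : ι) :
    Integrable (fun U : unitaryGroup ι ℂ => U i e * conj (U j e) * (U k e * conj (U l e))) μ := by
  have hc := fun a => UnitaryGroup.continuous_apply (n := ι) a e
  refine .of_bound (((hc i).mul (Complex.continuous_conj.comp (hc j))).mul
    ((hc k).mul (Complex.continuous_conj.comp (hc l)))).aestronglyMeasurable 1
    (.of_forall fun U => ?_)
  have h := fun a => entry_norm_bound_of_unitary U.2 a e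
  simp only [norm_mul, Complex.norm_conj]
  exact mul_le_one₀ (mul_le_one₀ (h i) (norm_nonneg _) (h j)) (by positivity)
    (mul_le_one₀ (h k) (norm_nonneg _) (h l))

lemma fourthMoment_comm (i j k l : ι) : fourthMoment μ e i j k l = fourthMoment μ e k j i l :=
  integral_congr_ae (.of_forall fun U => by ring)

lemma fourthMoment_comm_conj (i j k l : ι) :
    fourthMoment μ e i j k l = fourthMoment μ e i l k j :=
  integral_congr_ae (.of_forall fun U => by ring)

lemma sum_fourthMoment_sq_sq [IsProbabilityMeasure μ] :
    ∑ i, ∑ k, fourthMoment μ e i i k k = 1 := by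
  have hint := integrable_fourthMoment_integrand μ e
  have hcol : ∀ U : unitaryGroup ι ℂ,
      ∑ i, ∑ k, U i e * conj (U i e) * (U k e * conj (U k e)) = 1 := fun U => by
    simp_rw [← Finset.sum_mul_sum, mul_comm (U _ e), UnitaryGroup.sum_conj_mul_self_col, one_mul]
  calc ∑ i, ∑ k, fourthMoment μ e i i k k
      = ∑ i, ∫ U, ∑ k, U i e * conj (U i e) * (U k e * conj (U k e)) ∂μ :=
        Finset.sum_congr rfl fun i _ => (integral_finsetSum _ fun k _ => hint i i k k).symm
    _ = ∫ U, ∑ i, ∑ k, U i e * conj (U i e) * (U k e * conj (U k e)) ∂μ :=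
        (integral_finsetSum _ fun i _ => integrable_finsetSum _ fun k _ => hint i i k k).symm
    _ = 1 := by simp [hcol]

section Invariant

variable [IsFiniteMeasure μ] [μ.IsMulLeftInvariant]

lemma fourthMoment_eq_sum (V : unitaryGroup ι ℂ) (i j k l : ι) :
    fourthMoment μ e i j k l = ∑ a, ∑ b, ∑ c, ∑ d,
      V i a * conj (V j b) * (V k c * conj (V l d)) * fourthMoment μ e a b c d := by
  have hV : ∀ U : unitaryGroup ι ℂ, (V * U) i e * conj ((V * U) j e) *
      ((V * U) k e * conj ((V * U) l e)) = ∑ a, ∑ b, ∑ c, ∑ d,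
        V i a * conj (V j b) * (V k c * conj (V l d)) *
          (U a e * conj (U b e) * (U c e * conj (U d e))) := by
    intro U
    simp only [UnitaryGroup.mul_val, mul_apply, map_sum, map_mul, Finset.sum_mul_sum]
    refine Finset.sum_congr rfl fun a _ => ?_
    rw [Finset.sum_comm]
    exact Finset.sum_congr rfl fun b _ => Finset.sum_congr rfl fun c _ =>
      Finset.sum_congr rfl fun d _ => by ring
  have hint := integrable_fourthMoment_integrand μ e
  rw [fourthMoment, ← integral_mul_left_eq_self _ V, integral_congr_ae (.of_forall hV),
    integral_sum_sum_sum_sum fun a b c d => (hint a b c d).const_mul _]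
  simp only [integral_const_mul, fourthMoment]

lemma fourthMoment_diagonal {d : ι → ℂ} (hd : ∀ i, conj (d i) * d i = 1) (i j k l : ι) :
    fourthMoment μ e i j k l =
      d i * conj (d j) * (d k * conj (d l)) * fourthMoment μ e i j k l := by
  simpa [diagonal_apply, apply_ite conj, ite_mul, mul_ite] using
    fourthMoment_eq_sum μ e ⟨diagonal d, diagonal_mem_unitaryGroup hd⟩ i j k l

lemma fourthMoment_perm (σ : Equiv.Perm ι) (i j k l : ι) :
    fourthMoment μ e i j k l = fourthMoment μ e (σ i) (σ j) (σ k) (σ l) := by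
  simpa [ite_mul] using
    fourthMoment_eq_sum μ e ⟨σ.permMatrix ℂ, permMatrix_mem_unitaryGroup σ⟩ i j k l

lemma fourthMoment_eq_zero_of_count_ne (t : ι) {i j k l : ι}
    (h : (if i = t then 1 else 0) + (if k = t then 1 else 0) ≠
      (if j = t then 1 else 0) + (if l = t then 1 else 0)) :
    fourthMoment μ e i j k l = 0 := by
  let d : ι → ℂ := fun s => if s = t then I else 1
  have hphase : d i * conj (d j) * (d k * conj (d l)) ≠ 1 := by
    simp only [d]
    split_ifs at h ⊢ <;> simp [Complex.ext_iff] at h ⊢ <;> norm_num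
  have hd : ∀ s, conj (d s) * d s = 1 := fun s => by by_cases hs : s = t <;> simp [d, hs]
  exact (mul_left_eq_self₀.mp (fourthMoment_diagonal μ e hd i j k l).symm).resolve_left hphase

lemma fourthMoment_mix {a b : ι} (hab : a ≠ b) {α β : ℂ} (h₁ : conj α * α + conj β * β = 1)
    (h₂ : conj α * β + conj β * α = 0) :
    fourthMoment μ e a a a a = (conj α * α) ^ 2 * fourthMoment μ e a a a a +
      (conj β * β) ^ 2 * fourthMoment μ e b b b b +
      4 * (conj α * α) * (conj β * β) * fourthMoment μ e a a b b := by
  have h := fourthMoment_eq_sum μ e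
    ⟨α • 1 + β • swap ℂ a b, smul_one_add_smul_swap_mem_unitaryGroup a b h₁ h₂⟩ a a a a
  simp only [swap, Matrix.add_apply, Matrix.smul_apply, Matrix.one_apply, smul_eq_mul, mul_ite,
    mul_one, mul_zero, PEquiv.toMatrix_apply, Equiv.toPEquiv_apply, Equiv.swap_apply_left,
    Option.mem_def, Option.some.injEq, map_add, apply_ite conj, map_zero, mul_add, add_mul,
    ite_mul, zero_mul, Finset.sum_add_distrib, Finset.sum_ite_eq, Finset.mem_univ, ↓reduceIte] at h
  have hba : fourthMoment μ e b b a a = fourthMoment μ e a a b b :=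
    (fourthMoment_comm ..).trans (fourthMoment_comm_conj ..)
  -- of the 16 terms, all but `M aaaa`, `M bbbb` and the rearrangements of `M aabb` have
  -- unequal counts of `a` among the conjugated and the unconjugated indices
  simp (disch := simp [hab, hab.symm]) only [fourthMoment_eq_zero_of_count_ne μ e a, mul_zero,
    add_zero, zero_add] at h
  rw [hba, fourthMoment_comm_conj μ e a b b a, fourthMoment_comm μ e b a a b] at h
  linear_combination h

lemma fourthMoment_sq_sq_of_ne {a b : ι} (hab : a ≠ b) :
    fourthMoment μ e a a b b = fourthMoment μ e a a a a / 2 := by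
  have hperm : fourthMoment μ e b b b b = fourthMoment μ e a a a a := by
    simpa using (fourthMoment_perm μ e (Equiv.swap a b) a a a a).symm
  have hα : conj ((1 + I) / 2) * ((1 + I) / 2) = 1 / 2 := by
    simp only [map_div₀, map_add, map_one, map_ofNat, Complex.conj_I]
    linear_combination (-1 / 4 : ℂ) * Complex.I_sq
  have hβ : conj ((1 - I) / 2) * ((1 - I) / 2) = 1 / 2 := by
    simp only [map_div₀, map_sub, map_one, map_ofNat, Complex.conj_I]
    linear_combination (-1 / 4 : ℂ) * Complex.I_sq
  have hαβ : conj ((1 + I) / 2) * ((1 - I) / 2) + conj ((1 - I) / 2) * ((1 + I) / 2) = 0 := by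
    simp only [map_div₀, map_add, map_sub, map_one, map_ofNat, Complex.conj_I]
    linear_combination (1 / 2 : ℂ) * Complex.I_sq
  have hmix := fourthMoment_mix μ e hab (by rw [hα, hβ]; norm_num) hαβ
  rw [hα, hβ, hperm] at hmix
  linear_combination -hmix

end Invariant

lemma fourthMoment_sq_sq [IsProbabilityMeasure μ] [μ.IsMulLeftInvariant] (a b : ι) :
    fourthMoment μ e a a b b =
      (if a = b then 2 else 1) / (Fintype.card ι * (Fintype.card ι + 1)) := by
  have hrel : ∀ i k, fourthMoment μ e i i k k =
      (if i = k then 2 else 1) / 2 * fourthMoment μ e a a a a := fun i k => by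
    have hi : fourthMoment μ e i i i i = fourthMoment μ e a a a a := by
      simpa using fourthMoment_perm μ e (Equiv.swap i a) i i i i
    by_cases hik : i = k
    · subst hik; simp [hi]
    · rw [fourthMoment_sq_sq_of_ne μ e hik, hi, if_neg hik]; ring
  have hcount : ∑ i : ι, ∑ k : ι, (if i = k then 2 else 1 : ℂ) =
      Fintype.card ι * (Fintype.card ι + 1) := by
    have h21 : ∀ i k : ι, (if i = k then 2 else 1 : ℂ) = 1 + if i = k then 1 else 0 :=
      fun i k => by split_ifs <;> norm_num
    simp only [h21, Finset.sum_add_distrib, Finset.sum_const, Finset.card_univ, nsmul_eq_mul,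
      mul_one, Finset.sum_ite_eq, Finset.mem_univ, ↓reduceIte]
    ring
  have hnorm := sum_fourthMoment_sq_sq μ e
  rw [Finset.sum_congr rfl fun i _ => Finset.sum_congr rfl fun k _ => hrel i k] at hnorm
  simp only [← Finset.sum_mul, ← Finset.sum_div, hcount] at hnorm
  have hn : (Fintype.card ι : ℂ) * (Fintype.card ι + 1) ≠ 0 :=
    mul_ne_zero (Nat.cast_ne_zero.mpr (Fintype.card_pos_iff.mpr ⟨a⟩).ne')
      (Nat.cast_add_one_ne_zero _)
  rw [hrel, eq_div_iff hn]
  linear_combination (if a = b then 2 else 1 : ℂ) * hnorm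

end HaarColumn

lemma fourthMoment_purity_term {α β : Type*} [Fintype α] [DecidableEq α] [Fintype β]
    [DecidableEq β] (μ : Measure (unitaryGroup (α × β) ℂ)) [IsProbabilityMeasure μ]
    [μ.IsMulLeftInvariant] (e : α × β) (p v : α) (q q' : β) :
    fourthMoment μ e (p, q) (v, q) (v, q') (p, q') =
      ((if p = v then 1 else 0) + (if q = q' then 1 else 0)) /
        (Fintype.card (α × β) * (Fintype.card (α × β) + 1)) := by
  by_cases hpv : p = v
  · subst hpv
    rw [fourthMoment_sq_sq]
    by_cases hqq : q = q' <;> simp [hqq, one_add_one_eq_two]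
  · by_cases hqq : q = q'
    · subst hqq
      rw [fourthMoment_comm_conj, fourthMoment_sq_sq]
      simp [hpv]
    · rw [fourthMoment_eq_zero_of_count_ne μ e (p, q) (by simp [Ne.symm hpv, Ne.symm hqq])]
      simp [hpv, hqq]

lemma trace_trH_proj_mul_self {Dv Dh : ℕ} (φ : Fin Dv × Fin Dh → ℂ) :
    (trH (proj φ) * trH (proj φ)).trace =
      ∑ p, ∑ v, ∑ q, ∑ q', φ (p, q) * conj (φ (v, q)) * (φ (v, q') * conj (φ (p, q'))) := by
  simp only [trace, diag, mul_apply, trH, proj, of_apply, Finset.sum_mul_sum]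
  rfl

lemma integral_trace_trH_proj_mul_self {Dv Dh : ℕ}
    (μ : Measure (unitaryGroup (Fin Dv × Fin Dh) ℂ)) [IsFiniteMeasure μ] (e : Fin Dv × Fin Dh) :
    ∫ U : unitaryGroup (Fin Dv × Fin Dh) ℂ,
      (trH (proj fun i => U i e) * trH (proj fun i => U i e)).trace ∂μ =
      ∑ p, ∑ v, ∑ q, ∑ q', fourthMoment μ e (p, q) (v, q) (v, q') (p, q') := by
  simp_rw [trace_trH_proj_mul_self]
  exact integral_sum_sum_sum_sum fun p v q q' =>
    integrable_fourthMoment_integrand μ e (p, q) (v, q) (v, q') (p, q')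

/-- Lubkin's formula: for a Haar-random unit vector
`φ = U e₀` in `ℂ^{Dv} ⊗ ℂ^{Dh}` (with `U` distributed according to the Haar, i.e.
left-invariant, probability measure on the unitary group),
`E[Tr((Tr_h |φ⟩⟨φ|)²)] = (Dv + Dh)/(Dv Dh + 1)`. -/
theorem haar_average_purity (Dv Dh : ℕ) (hv : 0 < Dv) (hh : 0 < Dh)
    (μ : Measure (Matrix.unitaryGroup (Fin Dv × Fin Dh) ℂ)) [IsProbabilityMeasure μ]
    (hμ : ∀ V : Matrix.unitaryGroup (Fin Dv × Fin Dh) ℂ,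
      Measure.map (fun U => V * U) μ = μ) :
    ∫ U : Matrix.unitaryGroup (Fin Dv × Fin Dh) ℂ,
        ((trH (proj (fun i =>
            (U : Matrix (Fin Dv × Fin Dh) (Fin Dv × Fin Dh) ℂ) i (⟨0, hv⟩, ⟨0, hh⟩)))) *
          (trH (proj (fun i =>
            (U : Matrix (Fin Dv × Fin Dh) (Fin Dv × Fin Dh) ℂ) i (⟨0, hv⟩, ⟨0, hh⟩))))).trace ∂μ =
      ((Dv : ℂ) + (Dh : ℂ)) / ((Dv : ℂ) * (Dh : ℂ) + 1) := by
  have : μ.IsMulLeftInvariant := ⟨hμ⟩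
  rw [integral_trace_trH_proj_mul_self]
  have hcount : ∑ p : Fin Dv, ∑ v : Fin Dv, ∑ q : Fin Dh, ∑ q' : Fin Dh,
      ((if p = v then 1 else 0) + (if q = q' then 1 else 0) : ℂ) = Dv * Dh * (Dv + Dh) := by
    simp only [Finset.sum_add_distrib, Finset.sum_const, Finset.card_univ, Fintype.card_fin,
      nsmul_eq_mul, mul_ite, mul_one, mul_zero, Finset.sum_ite_eq, Finset.mem_univ, if_true]
    ring
  simp only [fourthMoment_purity_term, ← Finset.sum_div, hcount, Fintype.card_prod,
    Fintype.card_fin, Nat.cast_mul]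
  have hDv : (Dv : ℂ) ≠ 0 := Nat.cast_ne_zero.mpr hv.ne'
  have hDh : (Dh : ℂ) ≠ 0 := Nat.cast_ne_zero.mpr hh.ne'
  field_simp
end
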